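/- arXiv:2306.01727 — 4 statements merged into one kernel-verified Lean document; each statement's English description precedes it below -/
import Mathlib

section
/- As k → ∞ over odd integers, α_k / √(2k/π) → 1. -/
open Finset Real Filter

/-- `α_k = (1/2^{k-2}) · Σ_{k/2 < i ≤ k} C(k,i)·(i − k/2)` -/
noncomputable def alpha (k : ℕ) : ℝ :=
  (1 / 2 ^ (k - 2) : ℝ) *
    ∑ i ∈ (Finset.range (k + 1)).filter (fun i => k < 2 * i),
      (k.choose i : ℝ) * ((i : ℝ) - (k : ℝ) / 2)

lemma key_identity (m j : ℕ) (hj : j ≤ m) :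
    ((2*m+1).choose (m+1+j) : ℝ) * (2*(j:ℝ)+1) =
      ((2*m+1) : ℝ) * ((2*m).choose (m+j) : ℝ)
        - ((2*m+1) : ℝ) * ((2*m).choose (m+j+1) : ℝ) := by
  rcases eq_or_lt_of_le hj with rfl | hjm
  · have h1 : (2*j+1).choose (j+1+j) = 1 := by
      rw [show j+1+j = 2*j+1 by ring, Nat.choose_self]
    have h2 : (2*j).choose (j+j) = 1 := by
      rw [show j+j = 2*j by ring, Nat.choose_self]
    have h3 : (2*j).choose (j+j+1) = 0 := Nat.choose_eq_zero_of_lt (by omega)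
    rw [h1, h2, h3]
    push_cast
    ring
  · obtain ⟨d, rfl⟩ : ∃ d, m = j+1+d := ⟨m-j-1, by omega⟩
    set m := j+1+d with hm
    have h1 : (2*m+1) * (2*m).choose (m+j) = (2*m+1).choose (m+j+1) * (m+j+1) := by
      have := Nat.add_one_mul_choose_eq (2*m) (m+j)
      simpa [Nat.succ_eq_add_one] using this
    have h2 : (2*m+1) * (2*m).choose d = (2*m+1).choose (d+1) * (d+1) := by
      have := Nat.add_one_mul_choose_eq (2*m) d
      simpa [Nat.succ_eq_add_one] using this
    have h3 : (2*m).choose d = (2*m).choose (m+j+1) := by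
      have := Nat.choose_symm (show m+j+1 ≤ 2*m by omega)
      rw [show 2*m - (m+j+1) = d by omega] at this
      exact this
    have h4 : (2*m+1).choose (d+1) = (2*m+1).choose (m+1+j) := by
      have := Nat.choose_symm (show m+1+j ≤ 2*m+1 by omega)
      rw [show 2*m+1 - (m+1+j) = d+1 by omega] at this
      exact this
    rw [h3, h4] at h2
    have h1' : ((2*m+1) : ℝ) * ((2*m).choose (m+j) : ℝ)
        = ((2*m+1).choose (m+j+1) : ℝ) * ((m:ℝ)+j+1) := by exact_mod_cast h1
    have h2' : ((2*m+1) : ℝ) * ((2*m).choose (m+j+1) : ℝ)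
        = ((2*m+1).choose (m+1+j) : ℝ) * ((d:ℝ)+1) := by exact_mod_cast h2
    rw [h1', h2', show m+j+1 = m+1+j by ring]
    have : (m:ℝ) = (j:ℝ)+1+(d:ℝ) := by push_cast [hm]; ring
    rw [this]; ring

lemma alpha_odd (n : ℕ) (hn : 1 ≤ n) :
    alpha (2*n+1) = ((2*n:ℝ)+1) * ((2*n).choose n : ℝ) / 4^n := by
  unfold alpha
  have hfil : (Finset.range (2*n+1+1)).filter (fun i => 2*n+1 < 2*i)
      = Finset.Ico (n+1) (2*n+2) := by
    ext i
    simp only [Finset.mem_filter, Finset.mem_range, Finset.mem_Ico]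
    omega
  rw [hfil, Finset.sum_Ico_eq_sum_range, show 2*n+2 - (n+1) = n+1 by omega]
  have hterm : ∀ j ∈ Finset.range (n+1),
      ((2*n+1).choose (n+1+j) : ℝ) * (((n+1+j : ℕ):ℝ) - ((2*n+1:ℕ):ℝ)/2)
        = (fun j => ((2*n:ℝ)+1)/2 * ((2*n).choose (n+j) : ℝ)) j
          - (fun j => ((2*n:ℝ)+1)/2 * ((2*n).choose (n+j) : ℝ)) (j+1) := by
    intro j hj
    simp only [Finset.mem_range] at hj
    have hk := key_identity n j (by omega)
    simp only
    rw [show (((n+1+j : ℕ)):ℝ) - ((2*n+1:ℕ):ℝ)/2 = (2*(j:ℝ)+1)/2 by push_cast; ring,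
      show n+(j+1) = n+j+1 by ring]
    linear_combination hk / 2
  rw [Finset.sum_congr rfl hterm, Finset.sum_range_sub']
  have hz : (2*n).choose (n+(n+1)) = 0 := Nat.choose_eq_zero_of_lt (by omega)
  rw [hz]
  obtain ⟨p, rfl⟩ : ∃ p, n = p+1 := ⟨n-1, by omega⟩
  rw [show 2*(p+1)+1-2 = 2*p+1 by omega]
  have h4 : (4:ℝ)^(p+1) = 2^(2*p+1) * 2 := by
    rw [show (4:ℝ) = 2^2 by norm_num, ← pow_mul,
      show 2*(p+1) = (2*p+1)+1 by ring, pow_succ]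
  have h2 : (2:ℝ)^(2*p+1) ≠ 0 := by positivity
  field_simp [h4]
  simp only [h4, Nat.cast_zero, sub_zero]
  ring

lemma stirling_ratio (n : ℕ) (hn : 1 ≤ n) :
    Stirling.stirlingSeq (2*n) / (Stirling.stirlingSeq n)^2
      = ((2*n).choose n : ℝ) * Real.sqrt n / 4^n := by
  have hn' : (0:ℝ) < n := by exact_mod_cast hn
  have hfac : ((2*n).factorial : ℝ) = ((2*n).choose n : ℝ) * ((n.factorial:ℝ))^2 := by
    have h := Nat.choose_mul_factorial_mul_factorial (show n ≤ 2*n by omega)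
    rw [show 2*n - n = n by omega] at h
    calc ((2*n).factorial : ℝ) = (((2*n).choose n * n.factorial * n.factorial : ℕ) : ℝ) := by
          rw [h]
      _ = ((2*n).choose n : ℝ) * ((n.factorial:ℝ))^2 := by push_cast; ring
  rw [Stirling.stirlingSeq, Stirling.stirlingSeq]
  have hsa : Real.sqrt (2*((2*n:ℕ)):ℝ) = 2 * Real.sqrt n := by
    rw [show (2*((2*n:ℕ)):ℝ) = (2:ℝ)^2*(n:ℝ) by push_cast; ring,
      Real.sqrt_mul (by positivity), Real.sqrt_sq (by norm_num : (0:ℝ) ≤ 2)]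
  have hsb : Real.sqrt (2*(n:ℕ):ℝ) = Real.sqrt 2 * Real.sqrt n := by
    rw [Real.sqrt_mul (by norm_num : (0:ℝ) ≤ 2)]
  have hpow : ((((2*n:ℕ)):ℝ) / Real.exp 1) ^ (2*n) = 4^n * (((n:ℝ) / Real.exp 1) ^ n)^2 := by
    rw [show (((2*n:ℕ)):ℝ) / Real.exp 1 = 2 * ((n:ℝ) / Real.exp 1) by push_cast ; ring,
      mul_pow, ← pow_mul, pow_mul 2 2 n]
    norm_num
    ring
  rw [hsa, hsb, hpow, hfac]
  have h2 : ((n:ℝ) / Real.exp 1) ^ n > 0 := by positivity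
  have h3 : (n.factorial : ℝ) > 0 := by exact_mod_cast n.factorial_pos
  have h5 : Real.sqrt (n:ℝ) > 0 := Real.sqrt_pos.mpr hn'
  have h6 : Real.sqrt 2 > 0 := by positivity
  have hs2 : Real.sqrt 2 ^ 2 = 2 := Real.sq_sqrt (by norm_num)
  have hsn : Real.sqrt (n:ℝ) ^ 2 = (n:ℝ) := Real.sq_sqrt hn'.le
  rw [div_pow]
  field_simp
  ring_nf
  rw [hs2]

lemma centralBinom_tendsto :
    Tendsto (fun n : ℕ => Real.sqrt π * (((2*n).choose n : ℝ) * Real.sqrt n / 4^n))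
      atTop (nhds 1) := by
  have hπ : (0:ℝ) < π := Real.pi_pos
  have hs := Stirling.tendsto_stirlingSeq_sqrt_pi
  have h2n : Tendsto (fun n : ℕ => 2*n) atTop atTop :=
    Filter.tendsto_atTop_atTop.mpr fun b => ⟨b, fun a ha => by omega⟩
  have hA : Tendsto (fun n : ℕ => Stirling.stirlingSeq (2*n) / (Stirling.stirlingSeq n)^2)
      atTop (nhds (Real.sqrt π / (Real.sqrt π)^2)) :=
    (hs.comp h2n).div (hs.pow 2) (by rw [Real.sq_sqrt hπ.le]; positivity)
  have hval : Real.sqrt π * (Real.sqrt π / (Real.sqrt π)^2) = 1 := by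
    rw [Real.sq_sqrt hπ.le]
    rw [show Real.sqrt π * (Real.sqrt π / π) = Real.sqrt π * Real.sqrt π / π by ring,
      Real.mul_self_sqrt hπ.le]
    field_simp
  have := (tendsto_const_nhds (x := Real.sqrt π) (f := atTop)).mul hA
  rw [hval] at this
  refine this.congr' ?_
  filter_upwards [eventually_ge_atTop 1] with n hn
  rw [stirling_ratio n hn]

/-- As `k → ∞` along odd integers, `α_k / √(2k/π) → 1`. -/
theorem alpha_asymptotic :
    Tendsto (fun n : ℕ => alpha (2 * n + 1) / Real.sqrt (2 * (2 * n + 1) / π))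
      atTop (nhds 1) := by
  have hπ : (0:ℝ) < π := Real.pi_pos
  have hB : Tendsto (fun n : ℕ => Real.sqrt (1 + 1/(2*(n:ℝ)))) atTop (nhds 1) := by
    have h1 : Tendsto (fun n : ℕ => (1:ℝ) + 1/(2*(n:ℝ))) atTop (nhds 1) := by
      have ht : Tendsto (fun n : ℕ => 2*(n:ℝ)) atTop atTop :=
        (tendsto_natCast_atTop_atTop (R := ℝ)).const_mul_atTop two_pos
      have h0' : Tendsto (fun n : ℕ => 1/(2*(n:ℝ))) atTop (nhds 0) := by
        simpa [Function.comp_def, one_div, mul_inv, mul_comm] using tendsto_inv_atTop_zero.comp ht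
      simpa using tendsto_const_nhds.add h0'
    have := (Real.continuous_sqrt.tendsto 1).comp h1
    simpa [Function.comp_def] using this
  have hAB := centralBinom_tendsto.mul hB
  rw [mul_one] at hAB
  refine hAB.congr' ?_
  filter_upwards [eventually_ge_atTop 1] with n hn
  have hn' : (0:ℝ) < n := by exact_mod_cast hn
  have ha : (0:ℝ) < 2*(n:ℝ)+1 := by positivity
  rw [alpha_odd n hn]
  have e0 : ((2*n+1 : ℕ) : ℝ) = 2*(n:ℝ)+1 := by push_cast; ring
  have e1 : Real.sqrt (2 * (2*(n:ℝ)+1) / π)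
      = Real.sqrt 2 * Real.sqrt (2*(n:ℝ)+1) / Real.sqrt π := by
    rw [Real.sqrt_div (by positivity), Real.sqrt_mul (by norm_num : (0:ℝ) ≤ 2)]
  have e2 : Real.sqrt (1 + 1/(2*(n:ℝ)))
      = Real.sqrt (2*(n:ℝ)+1) / (Real.sqrt 2 * Real.sqrt n) := by
    rw [show (1:ℝ) + 1/(2*(n:ℝ)) = (2*(n:ℝ)+1)/(2*(n:ℝ)) by field_simp,
      Real.sqrt_div ha.le, Real.sqrt_mul (by norm_num : (0:ℝ) ≤ 2)]
  rw [e1, e2]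
  have hs : Real.sqrt (2*(n:ℝ)+1) > 0 := Real.sqrt_pos.mpr ha
  have hs2 : Real.sqrt 2 > 0 := by positivity
  have hsn : Real.sqrt (n:ℝ) > 0 := Real.sqrt_pos.mpr hn'
  have hsπ : Real.sqrt π > 0 := Real.sqrt_pos.mpr hπ
  have h4 : (0:ℝ) < 4^n := by positivity
  have hss : Real.sqrt (2*(n:ℝ)+1) * Real.sqrt (2*(n:ℝ)+1) = 2*(n:ℝ)+1 :=
    Real.mul_self_sqrt ha.le
  field_simp
  ring_nf
  rw [show Real.sqrt (1+(n:ℝ)*2) ^ 2 = 1+(n:ℝ)*2 from Real.sq_sqrt (by positivity)]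
  ring
end

section
/- If p > 1/2 − 1/(2α_k), then g is strictly decreasing on [0,1] and t = 1/2 is its unique zero in [0,1]. -/
open Finset

/-- `P{Bin(k,x) ≥ (k+1)/2}`: the upper tail of a binomial random variable
with `k` trials and success probability `x`. -/
noncomputable def binTail (k : ℕ) (x : ℝ) : ℝ :=
  ∑ i ∈ Finset.Icc ((k + 1) / 2) k, (k.choose i : ℝ) * x ^ i * (1 - x) ^ (k - i)

lemma choose_id1 (k i : ℕ) (hi : 1 ≤ i) (hk : 1 ≤ k) :
    i * k.choose i = k * (k-1).choose (i-1) := by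
  have h := Nat.add_one_mul_choose_eq (k-1) (i-1)
  have hk' : k-1+1 = k := by omega
  have hi' : i-1+1 = i := by omega
  rw [hk', hi'] at h
  rw [mul_comm, ← h]

lemma choose_id2 (k i : ℕ) (hk : 1 ≤ k) :
    (k - i) * k.choose i = k * (k-1).choose i := by
  have h1 := Nat.choose_succ_right_eq k i
  have h2 := choose_id1 k (i+1) (by omega) hk
  simp only [Nat.add_sub_cancel] at h2
  rw [mul_comm, ← h1, mul_comm, h2]

lemma tele_sum (n : ℕ) (A : ℕ → ℝ) :
    ∑ i ∈ Finset.Icc (n+1) (2*n+1), (A (i-1) - A i) = A n - A (2*n+1) := by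
  rw [← Finset.Ico_add_one_right_eq_Icc, Finset.sum_Ico_eq_sum_range]
  have h : 2*n+1+1-(n+1) = n+1 := by omega
  rw [h]
  have h2 : ∀ i ∈ Finset.range (n+1), A (n+1+i-1) - A (n+1+i)
      = (fun j => A (n+j)) i - (fun j => A (n+j)) (i+1) := by
    intro i _; simp only; congr 2 <;> omega
  rw [Finset.sum_congr rfl h2, Finset.sum_range_sub' (fun j => A (n+j))]
  norm_num; congr 1; omega

lemma tail_sum (n : ℕ) :
    ∑ i ∈ Finset.Icc (n+1) (2*n+1), (2*n+1).choose i = 4^n := by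
  have h1 := Nat.sum_range_choose_halfway n
  have h2 := Nat.sum_range_choose (2*n+1)
  have h3 : ∑ i ∈ Finset.Ico 0 (n+1), (2*n+1).choose i
      + ∑ i ∈ Finset.Ico (n+1) (2*n+1+1), (2*n+1).choose i
      = ∑ i ∈ Finset.Ico 0 (2*n+1+1), (2*n+1).choose i :=
    Finset.sum_Ico_consecutive _ (by omega) (by omega)
  rw [Nat.Ico_zero_eq_range, Finset.Ico_add_one_right_eq_Icc, Nat.Ico_zero_eq_range, h1, h2] at h3
  have h4 : (2:ℕ)^(2*n+1) = 2 * 4^n := by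
    rw [pow_succ, pow_mul]; norm_num [mul_comm]
  omega

lemma binTail_eq (n : ℕ) (x : ℝ) : binTail (2*n+1) x
    = ∑ i ∈ Finset.Icc (n+1) (2*n+1),
      ((2*n+1).choose i : ℝ) * x ^ i * (1 - x) ^ (2*n+1 - i) := by
  have h : (2*n+1+1)/2 = n+1 := by omega
  rw [binTail, h]

lemma binTail_half (n : ℕ) : binTail (2*n+1) (1/2 : ℝ) = 1/2 := by
  rw [binTail_eq]
  have h : ∀ i ∈ Finset.Icc (n+1) (2*n+1),
      ((2*n+1).choose i : ℝ) * (1/2:ℝ)^i * (1-1/2:ℝ)^(2*n+1-i)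
      = ((2*n+1).choose i : ℝ) * (1/2:ℝ)^(2*n+1) := by
    intro i hi
    simp only [Finset.mem_Icc] at hi
    have hh : (1-(1/2:ℝ)) = 1/2 := by norm_num
    rw [hh, mul_assoc, ← pow_add]
    congr 2
    omega
  rw [Finset.sum_congr rfl h, ← Finset.sum_mul, ← Nat.cast_sum, tail_sum n]
  push_cast
  rw [show (4:ℝ) = 2^2 by norm_num, ← pow_mul, one_div, inv_pow, pow_succ]
  have h0 : (2:ℝ)^(2*n) ≠ 0 := by positivity
  field_simp

lemma hasDerivAt_term (c : ℝ) (i j : ℕ) (x : ℝ) :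
    HasDerivAt (fun y => c * y ^ i * (1 - y) ^ j)
      (c * (i * x ^ (i-1)) * (1 - x) ^ j - c * x ^ i * (j * (1 - x) ^ (j-1))) x := by
  have h1 : HasDerivAt (fun y : ℝ => c * y ^ i) (c * (i * x ^ (i-1))) x :=
    (hasDerivAt_pow i x).const_mul c
  have h2 : HasDerivAt (fun y : ℝ => (1 - y) ^ j) (-(j * (1 - x) ^ (j-1))) x := by
    have hb : HasDerivAt (fun y : ℝ => 1 - y) (-1) x := by
      simpa using (hasDerivAt_id x).const_sub (1:ℝ)
    have := (hasDerivAt_pow j (1 - x)).comp x hb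
    exact this.congr_deriv (by ring)
  have := h1.mul h2
  exact this.congr_deriv (by ring)

lemma hasDerivAt_binTail (n : ℕ) (x : ℝ) :
    HasDerivAt (binTail (2*n+1))
      ((2*n+1) * ((2*n).choose n : ℝ) * (x*(1-x))^n) x := by
  have hfun : binTail (2*n+1) = fun y => ∑ i ∈ Finset.Icc (n+1) (2*n+1),
      ((2*n+1).choose i : ℝ) * y ^ i * (1 - y) ^ (2*n+1 - i) := by
    funext y; exact binTail_eq n y
  set A : ℕ → ℝ := fun j => ((2*n+1:ℕ):ℝ) * (((2*n).choose j : ℕ) : ℝ) * x^j * (1-x)^(2*n-j)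
    with hA
  rw [hfun]
  have hsum : HasDerivAt (fun y => ∑ i ∈ Finset.Icc (n+1) (2*n+1),
      ((2*n+1).choose i : ℝ) * y ^ i * (1 - y) ^ (2*n+1 - i))
      (∑ i ∈ Finset.Icc (n+1) (2*n+1), (A (i-1) - A i)) x := by
    apply HasDerivAt.fun_sum
    intro i hi
    simp only [Finset.mem_Icc] at hi
    have hd := hasDerivAt_term (((2*n+1).choose i : ℕ) : ℝ) i (2*n+1 - i) x
    refine hd.congr_deriv (Eq.symm ?_)
    have e1 : (((2*n+1).choose i : ℕ) : ℝ) * (i:ℝ)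
        = ((2*n+1:ℕ):ℝ) * (((2*n).choose (i-1) : ℕ) : ℝ) := by
      have h := choose_id1 (2*n+1) i (by omega) (by omega)
      have h2 : (2*n+1) - 1 = 2*n := by omega
      rw [h2, mul_comm] at h
      exact_mod_cast congrArg (fun m : ℕ => (m:ℝ)) h
    have e2 : (((2*n+1).choose i : ℕ) : ℝ) * (((2*n+1 - i : ℕ) : ℕ) : ℝ)
        = ((2*n+1:ℕ):ℝ) * (((2*n).choose i : ℕ) : ℝ) := by
      have h := choose_id2 (2*n+1) i (by omega)
      have h2 : (2*n+1) - 1 = 2*n := by omega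
      rw [h2, mul_comm] at h
      have := congrArg (fun m : ℕ => (m:ℝ)) h
      push_cast at this
      push_cast
      linarith
    have ex1 : 2*n - (i-1) = 2*n+1 - i := by omega
    have ex2 : 2*n - i = 2*n+1 - i - 1 := by omega
    rw [hA]
    simp only
    rw [ex1, ex2]
    linear_combination (-(x^(i-1)*(1-x)^(2*n+1-i))) * e1 + (x^i*(1-x)^(2*n+1-i-1)) * e2
  have htel := tele_sum n A
  have hzero : A (2*n+1) = 0 := by
    rw [hA]; simp [Nat.choose_eq_zero_of_lt (by omega : 2*n < 2*n+1)]
  have hAn : A n = ((2*n+1:ℕ):ℝ) * (((2*n).choose n : ℕ) : ℝ) * (x*(1-x))^n := by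
    rw [hA]; simp only
    have : 2*n - n = n := by omega
    rw [this, mul_pow]; ring
  rw [htel, hzero, sub_zero, hAn] at hsum
  convert hsum using 2 <;> push_cast <;> ring

lemma alpha_sum (n : ℕ) :
    ∑ i ∈ (Finset.range (2*n+1+1)).filter (fun i => 2*n+1 < 2*i),
      ((2*n+1).choose i : ℝ) * ((i:ℝ) - ((2*n+1:ℕ):ℝ)/2)
    = ((2*n+1:ℕ):ℝ) * ((2*n).choose n : ℝ) / 2 := by
  have hset : (Finset.range (2*n+1+1)).filter (fun i => 2*n+1 < 2*i)
      = Finset.Icc (n+1) (2*n+1) := by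
    ext i
    simp only [Finset.mem_filter, Finset.mem_range, Finset.mem_Icc]
    omega
  rw [hset]
  set A : ℕ → ℝ := fun j => ((2*n+1:ℕ):ℝ) * (((2*n).choose j : ℕ) : ℝ) / 2 with hA
  have h : ∀ i ∈ Finset.Icc (n+1) (2*n+1),
      ((2*n+1).choose i : ℝ) * ((i:ℝ) - ((2*n+1:ℕ):ℝ)/2) = A (i-1) - A i := by
    intro i hi
    simp only [Finset.mem_Icc] at hi
    have e1 : (((2*n+1).choose i : ℕ) : ℝ) * (i:ℝ)
        = ((2*n+1:ℕ):ℝ) * (((2*n).choose (i-1) : ℕ) : ℝ) := by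
      have h := choose_id1 (2*n+1) i (by omega) (by omega)
      have h2 : (2*n+1) - 1 = 2*n := by omega
      rw [h2, mul_comm] at h
      exact_mod_cast congrArg (fun m : ℕ => (m:ℝ)) h
    have e2 : (((2*n+1).choose i : ℕ) : ℝ) * (((2*n+1:ℕ):ℝ) - (i:ℝ))
        = ((2*n+1:ℕ):ℝ) * (((2*n).choose i : ℕ) : ℝ) := by
      have h := choose_id2 (2*n+1) i (by omega)
      have h2 : (2*n+1) - 1 = 2*n := by omega
      rw [h2, mul_comm] at h
      have hc := congrArg (fun m : ℕ => (m:ℝ)) h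
      simp only [Nat.cast_mul] at hc
      rw [Nat.cast_sub hi.2] at hc
      exact hc
    rw [hA]; simp only
    linear_combination (1/2) * e1 - (1/2) * e2
  rw [Finset.sum_congr rfl h, tele_sum n A, hA]
  simp [Nat.choose_eq_zero_of_lt (by omega : 2*n < 2*n+1)]

lemma alpha_eq (n : ℕ) (hn : 1 ≤ n) :
    alpha (2*n+1) = ((2*n+1:ℕ):ℝ) * ((2*n).choose n : ℝ) / 4^n := by
  rw [alpha, alpha_sum n]
  have h2 : 2*n+1-2 = 2*n-1 := by omega
  rw [h2]
  have h3 : (4:ℝ)^n = 2^(2*n-1) * 2 := by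
    rw [← pow_succ]
    have h : 2*n-1+1 = 2*n := by omega
    rw [h, pow_mul]; norm_num
  rw [h3]
  have h0 : (2:ℝ)^(2*n-1) ≠ 0 := by positivity
  field_simp

theorem g_unique_zero_high_mutation (k : ℕ) (hk : Odd k) (hkpos : 0 < k)
    (p : ℝ) (hp : p ∈ Set.Ioo (0 : ℝ) (1 / 2))
    (hpthr : 1 / 2 - 1 / (2 * alpha k) < p)
    (g : ℝ → ℝ) (hg : ∀ t, g t = binTail k ((1 - 2 * p) * t + p) - t) :
    StrictAntiOn g (Set.Icc (0 : ℝ) 1) ∧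
    ∀ t ∈ Set.Icc (0 : ℝ) 1, (g t = 0 ↔ t = 1 / 2) := by
  obtain ⟨n, hn⟩ := hk
  subst hn
  obtain ⟨hp0, hp2⟩ := hp
  set C : ℝ := (((2*n).choose n : ℕ) : ℝ) with hC
  have hCpos : (0:ℝ) < C := by
    rw [hC]; exact_mod_cast Nat.choose_pos (by omega : n ≤ 2*n)
  -- key bound
  have hkey : (1 - 2*p) * ((2*(n:ℝ)+1) * C / 4^n) < 1 := by
    rcases Nat.eq_zero_or_pos n with h0 | h1
    · subst h0
      simp only [hC]
      norm_num
      nlinarith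
    · have ha := alpha_eq n h1
      have ha' : alpha (2*n+1) = (2*(n:ℝ)+1) * C / 4^n := by
        rw [ha, hC]; push_cast; ring
      have hapos : (0:ℝ) < alpha (2*n+1) := by
        rw [ha']; positivity
      have h2a : (0:ℝ) < 2 * alpha (2*n+1) := by linarith
      have hlt : (1/2 - p) * (2 * alpha (2*n+1)) < 1 := by
        have hstep : 1/2 - p < 1 / (2 * alpha (2*n+1)) := by linarith
        calc (1/2 - p) * (2 * alpha (2*n+1))
            < 1 / (2 * alpha (2*n+1)) * (2 * alpha (2*n+1)) := by
              apply mul_lt_mul_of_pos_right hstep h2a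
          _ = 1 := by field_simp
      calc (1 - 2*p) * ((2*(n:ℝ)+1) * C / 4^n)
          = (1/2 - p) * (2 * alpha (2*n+1)) := by rw [ha']; ring
        _ < 1 := hlt
  -- derivative of g
  have hgfun : g = fun t => binTail (2*n+1) ((1 - 2*p)*t + p) - t := funext hg
  have hder : ∀ t : ℝ, HasDerivAt g
      ((1 - 2*p) * ((2*(n:ℝ)+1) * C * ((((1-2*p)*t+p) * (1 - ((1-2*p)*t+p)))^n)) - 1) t := by
    intro t
    rw [hgfun]
    have haff : HasDerivAt (fun t : ℝ => (1-2*p)*t + p) (1-2*p) t := by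
      simpa using ((hasDerivAt_id t).const_mul (1-2*p)).add_const p
    have hb := (hasDerivAt_binTail n ((1-2*p)*t+p)).comp t haff
    have hb' : HasDerivAt (fun t : ℝ => binTail (2*n+1) ((1-2*p)*t+p))
        ((2*n+1) * ((2*n).choose n : ℝ) *
          ((((1-2*p)*t+p)*(1 - ((1-2*p)*t+p)))^n) * (1-2*p)) t := hb
    have hfin := hb'.sub (hasDerivAt_id t)
    exact hfin.congr_deriv (by
    rw [hC]
    push_cast
    ring)
  have hcont : Continuous g := by
    have hdiff : Differentiable ℝ g := fun t => (hder t).differentiableAt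
    exact hdiff.continuous
  have hderiv_neg : ∀ t ∈ interior (Set.Icc (0:ℝ) 1), deriv g t < 0 := by
    rw [interior_Icc]
    intro t ht
    obtain ⟨ht0, ht1⟩ := ht
    rw [(hder t).deriv]
    set y : ℝ := (1-2*p)*t + p with hy
    have hy0 : 0 < y := by nlinarith
    have hy1 : y < 1 := by nlinarith
    have hq : y*(1-y) ≤ 1/4 := by nlinarith [sq_nonneg (y - 1/2)]
    have hq0 : 0 ≤ y*(1-y) := by nlinarith
    have hpow : (y*(1-y))^n ≤ (1/4)^n := pow_le_pow_left₀ hq0 hq n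
    have hKC : (0:ℝ) ≤ (2*(n:ℝ)+1) * C := by positivity
    have h1 : (1-2*p) * ((2*(n:ℝ)+1) * C * (y*(1-y))^n)
        ≤ (1-2*p) * ((2*(n:ℝ)+1) * C * (1/4)^n) := by
      apply mul_le_mul_of_nonneg_left _ (by linarith)
      exact mul_le_mul_of_nonneg_left hpow hKC
    have heq : (2*(n:ℝ)+1) * C * (1/4)^n = (2*(n:ℝ)+1) * C / 4^n := by
      rw [div_pow, one_pow]; ring
    rw [heq] at h1
    linarith
  have hSA : StrictAntiOn g (Set.Icc (0:ℝ) 1) :=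
    strictAntiOn_of_deriv_neg (convex_Icc 0 1) hcont.continuousOn hderiv_neg
  have ghalf : g (1/2) = 0 := by
    rw [hg]
    have h12 : (1 - 2*p)*(1/2) + p = 1/2 := by ring
    rw [h12, binTail_half n]
    norm_num
  refine ⟨hSA, fun t ht => ⟨fun h0 => ?_, fun h => by rw [h]; exact ghalf⟩⟩
  have half_mem : (1/2:ℝ) ∈ Set.Icc (0:ℝ) 1 := by norm_num
  by_contra hne
  rcases lt_or_gt_of_ne hne with hlt | hgt
  · have := hSA ht half_mem hlt
    rw [ghalf, h0] at this
    exact lt_irrefl 0 this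
  · have := hSA half_mem ht hgt
    rw [ghalf, h0] at this
    exact lt_irrefl 0 this
end

section
/- Let c₁ > 0 and define b(t) = exp(−c₁(1/2 − t)²) − t on [0,1]. If c₁ ≥ 32·log 2, then b(e^{−c₁/16}) ≤ 0; consequently the smallest zero of b in [0,1] is at most e^{−c₁/16}. -/
theorem b_first_zero_bound (c₁ : ℝ) (hc₁ : 0 < c₁) (hc₁' : 32 * Real.log 2 ≤ c₁)
    (b : ℝ → ℝ) (hb : ∀ t, b t = Real.exp (-c₁ * (1 / 2 - t) ^ 2) - t) :
    b (Real.exp (-c₁ / 16)) ≤ 0 ∧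
    ∀ t₀, IsLeast {t ∈ Set.Icc (0 : ℝ) 1 | b t = 0} t₀ →
      t₀ ≤ Real.exp (-c₁ / 16) := by
  set x := Real.exp (-c₁ / 16) with hx
  have hxpos : 0 < x := Real.exp_pos _
  have hx4 : x ≤ 1 / 4 := by
    have h1 : -c₁ / 16 ≤ -(2 * Real.log 2) := by linarith
    calc x ≤ Real.exp (-(2 * Real.log 2)) := Real.exp_le_exp.2 h1
      _ = 1 / 4 := by
        rw [show (2:ℝ) * Real.log 2 = Real.log 4 by
          rw [show (4:ℝ) = 2 ^ 2 by norm_num, Real.log_pow]; push_cast; ring,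
          Real.exp_neg, Real.exp_log (by norm_num : (0:ℝ) < 4)]
        norm_num
  have hbx : b x ≤ 0 := by
    rw [hb]
    have h2 : -c₁ * (1 / 2 - x) ^ 2 ≤ -c₁ / 16 := by
      have : (1 / 16 : ℝ) ≤ (1 / 2 - x) ^ 2 := by nlinarith
      nlinarith
    have := Real.exp_le_exp.2 h2
    linarith
  refine ⟨hbx, fun t₀ ht₀ => ?_⟩
  -- find a zero in [0, x]
  have hb0 : 0 ≤ b 0 := by
    rw [hb]; norm_num; positivity
  have hcont : ContinuousOn b (Set.Icc 0 x) := by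
    have : Continuous fun t => Real.exp (-c₁ * (1 / 2 - t) ^ 2) - t := by
      continuity
    exact (this.congr (fun t => (hb t).symm)).continuousOn
  have hsub : Set.Icc (b x) (b 0) ⊆ b '' Set.Icc 0 x :=
    intermediate_value_Icc' (le_of_lt hxpos) hcont
  obtain ⟨c, hc, hbc⟩ := hsub ⟨hbx, hb0⟩
  have hc1 : c ∈ Set.Icc (0:ℝ) 1 := ⟨hc.1, le_trans hc.2 (by linarith)⟩
  exact le_trans (ht₀.2 ⟨hc1, hbc⟩) hc.2
end

section
/- If p ≤ 1/2 − C/(2α_k) with C ≥ √(8·log 2/π) chosen so that 2k(1−2p)² ≥ 32·log 2, then the smallest zero β₁ of g in (0,1/2) satisfies β₁ ≤ exp(−k(1−2p)²/8). -/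
open Finset Real

lemma binTail_le_exp (j : ℕ) (x : ℝ) (hx0 : 0 ≤ x) (hx : x ≤ 1/2) :
    binTail (2*j+1) x ≤ Real.exp (-(2*j+1 : ℝ) * (1-2*x)^2 / 2) := by
  set k := 2*j+1 with hkdef
  have hm : (k+1)/2 = j+1 := by omega
  have hx1 : x ≤ 1 - x := by linarith
  have h1x : (0:ℝ) ≤ 1 - x := by linarith
  set A : ℝ := 2^k * (x^(j+1) * (1-x)^j) with hA
  have hAnn : 0 ≤ A := by positivity
  have step1 : binTail k x ≤ A := by
    rw [binTail, hm]
    calc ∑ i ∈ Finset.Icc (j+1) k, (k.choose i : ℝ) * x ^ i * (1 - x) ^ (k - i)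
        ≤ ∑ i ∈ Finset.Icc (j+1) k, (k.choose i : ℝ) * (x^(j+1) * (1-x)^j) := by
          apply Finset.sum_le_sum
          intro i hi
          simp only [Finset.mem_Icc] at hi
          have h1 : x ^ i = x^(j+1) * x^(i-(j+1)) := by
            rw [← pow_add]; congr 1; omega
          have h2 : (1-x)^j = (1-x)^(i-(j+1)) * (1-x)^(k-i) := by
            rw [← pow_add]; congr 1; omega
          rw [mul_assoc, h1, h2]
          have hmid : x^(i-(j+1)) ≤ (1-x)^(i-(j+1)) := pow_le_pow_left₀ hx0 hx1 _
          have : x ^ (j + 1) * x ^ (i - (j + 1)) * (1 - x) ^ (k - i)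
              ≤ x ^ (j + 1) * ((1 - x) ^ (i - (j + 1)) * (1 - x) ^ (k - i)) := by
            rw [← mul_assoc]
            gcongr
          exact mul_le_mul_of_nonneg_left this (by positivity)
      _ = (∑ i ∈ Finset.Icc (j+1) k, (k.choose i : ℝ)) * (x^(j+1) * (1-x)^j) := by
          rw [Finset.sum_mul]
      _ ≤ 2^k * (x^(j+1) * (1-x)^j) := by
          apply mul_le_mul_of_nonneg_right _ (by positivity)
          have hsub : ∑ i ∈ Finset.Icc (j+1) k, (k.choose i : ℝ)
              ≤ ∑ i ∈ Finset.range (k+1), (k.choose i : ℝ) := by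
            apply Finset.sum_le_sum_of_subset_of_nonneg
            · intro i hi
              simp only [Finset.mem_Icc, Finset.mem_range] at *
              omega
            · intros; positivity
          have hsum : ∑ i ∈ Finset.range (k+1), (k.choose i : ℝ) = 2^k := by
            rw [← Nat.cast_sum]
            norm_cast
            exact Nat.sum_range_choose k
          linarith
  set B : ℝ := Real.exp (-(k : ℝ) * (1-2*x)^2 / 2) with hB
  have hBpos : 0 < B := Real.exp_pos _
  have step2 : A^2 ≤ B^2 := by
    have hmulpow : (4*x*(1-x))^(2*j) = 2^(2*(2*j)) * (x^(2*j) * (1-x)^(2*j)) := by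
      rw [mul_pow, mul_pow, show (4:ℝ) = 2^2 by norm_num, ← pow_mul]
      ring
    have hA2 : A^2 = (4*x*(1-x))^(2*j) * (2*x)^2 := by
      rw [hmulpow, hA, hkdef]
      ring
    have hd0 : 0 ≤ 1 - 2*x := by linarith
    have hd1 : 1 - 2*x ≤ 1 := by linarith
    have e1 : (4*x*(1-x)) = 1 - (1-2*x)^2 := by ring
    have e2 : (2*x)^2 ≤ 1 - (1-2*x)^2 := by nlinarith
    have e3 : A^2 ≤ (1 - (1-2*x)^2)^(2*j+1) := by
      rw [hA2, pow_succ, e1]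
      have h4 : (0:ℝ) ≤ 1 - (1-2*x)^2 := by nlinarith
      exact mul_le_mul_of_nonneg_left e2 (by positivity)
    have e4 : (1 - (1-2*x)^2)^(2*j+1) ≤ Real.exp (-(1-2*x)^2)^(2*j+1) := by
      apply pow_le_pow_left₀ (by nlinarith)
      linarith [Real.add_one_le_exp (-(1-2*x)^2)]
    have e5 : Real.exp (-(1-2*x)^2)^(2*j+1) = B^2 := by
      rw [hB, ← Real.exp_nat_mul, ← Real.exp_nat_mul]
      congr 1
      push_cast [hkdef]
      ring
    exact e3.trans (e4.trans (le_of_eq e5))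
  have hBx : B = Real.exp (-(2*(j:ℝ)+1) * (1-2*x)^2 / 2) := by
    rw [hB, hkdef]; push_cast; ring_nf
  have : A ≤ B := by nlinarith [step2, hAnn, hBpos]
  calc binTail k x ≤ A := step1
    _ ≤ B := this
    _ = _ := hBx

theorem beta_one_bound (k : ℕ) (hk : Odd k) (hkpos : 0 < k)
    (p : ℝ) (hp : p ∈ Set.Ioo (0 : ℝ) (1 / 2))
    (C : ℝ) (hC : Real.sqrt (8 * Real.log 2 / π) ≤ C)
    (hpC : p ≤ 1 / 2 - C / (2 * alpha k))
    (h2k : 32 * Real.log 2 ≤ 2 * k * (1 - 2 * p) ^ 2)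
    (g : ℝ → ℝ) (hg : ∀ t, g t = binTail k ((1 - 2 * p) * t + p) - t)
    (β₁ : ℝ) (hβ₁ : IsLeast {t ∈ Set.Ioo (0 : ℝ) (1 / 2) | g t = 0} β₁) :
    β₁ ≤ Real.exp (-(k : ℝ) * (1 - 2 * p) ^ 2 / 8) := by
  obtain ⟨j, hj⟩ := hk
  obtain ⟨hp0, hp2⟩ := hp
  have h12p : 0 < 1 - 2*p := by linarith
  have key : ∀ t : ℝ, 0 ≤ t → t ≤ 1/2 →
      binTail k ((1 - 2 * p) * t + p) ≤
        Real.exp (-(k:ℝ) * ((1-2*p)*(1-2*t))^2 / 2) := by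
    intro t ht0 ht1
    have hx0 : 0 ≤ (1-2*p)*t+p := by nlinarith
    have hx1 : (1-2*p)*t+p ≤ 1/2 := by nlinarith
    have hb := binTail_le_exp j ((1-2*p)*t+p) hx0 hx1
    have hk' : k = 2*j+1 := by omega
    rw [hk']
    have harg : -((2*j+1 : ℕ):ℝ) * ((1-2*p)*(1-2*t))^2 / 2
        = -(2*(j:ℝ)+1) * (1-2*((1-2*p)*t+p))^2 / 2 := by push_cast; ring
    rw [harg]
    exact hb
  have hl2 : 0 < Real.log 2 := Real.log_pos (by norm_num)
  have hk8 : Real.exp (-(k:ℝ)*(1-2*p)^2/8) ≤ 1/4 := by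
    have h1 : -(k:ℝ)*(1-2*p)^2/8 ≤ -(2*Real.log 2) := by linarith
    calc Real.exp (-(k:ℝ)*(1-2*p)^2/8) ≤ Real.exp (-(2*Real.log 2)) :=
          Real.exp_le_exp.mpr h1
      _ = 1/4 := by
          rw [show (2:ℝ)*Real.log 2 = Real.log 4 by
                rw [show (4:ℝ) = 2^2 by norm_num, Real.log_pow]; push_cast; ring,
            Real.exp_neg, Real.exp_log (by norm_num)]
          norm_num
  have hgfun : g = fun t => binTail k ((1 - 2 * p) * t + p) - t := funext hg
  have hgc : Continuous g := by
    rw [hgfun]; unfold binTail; fun_prop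
  have hg0 : 0 < g 0 := by
    rw [hg]
    simp only [mul_zero, zero_add, sub_zero, binTail]
    apply Finset.sum_pos
    · intro i hi
      simp only [Finset.mem_Icc] at hi
      have hch : 0 < (k.choose i : ℝ) := by exact_mod_cast Nat.choose_pos hi.2
      exact mul_pos (mul_pos hch (pow_pos hp0 _)) (pow_pos (by linarith) _)
    · exact ⟨(k+1)/2, by simp only [Finset.mem_Icc]; omega⟩
  have hg14 : g (1/4) ≤ 0 := by
    rw [hg]
    have h1 := key (1/4) (by norm_num) (by norm_num)
    have h2 : -(k:ℝ)*((1-2*p)*(1-2*(1/4:ℝ)))^2/2 = -(k:ℝ)*(1-2*p)^2/8 := by ring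
    rw [h2] at h1
    linarith
  obtain ⟨c, hc, hgc0⟩ := intermediate_value_Icc' (by norm_num : (0:ℝ) ≤ 1/4)
    hgc.continuousOn ⟨hg14, hg0.le⟩
  have hcpos : 0 < c := by
    rcases hc.1.lt_or_eq with h | h
    · exact h
    · exfalso; rw [← h] at hgc0; linarith
  have hβle : β₁ ≤ c := hβ₁.2 ⟨⟨hcpos, by linarith [hc.2]⟩, hgc0⟩
  have hβ14 : β₁ ≤ 1/4 := hβle.trans hc.2
  obtain ⟨⟨hβpos, hβhalf⟩, hβzero⟩ := hβ₁.1
  have h1 := key β₁ hβpos.le (by linarith)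
  have hbin : binTail k ((1-2*p)*β₁+p) = β₁ := by
    have e := hg β₁; rw [hβzero] at e; linarith
  have hB14 : (1:ℝ)/4 ≤ (1-2*β₁)^2 := by nlinarith
  have h2 : Real.exp (-(k:ℝ)*((1-2*p)*(1-2*β₁))^2/2) ≤
      Real.exp (-(k:ℝ)*(1-2*p)^2/8) := by
    apply Real.exp_le_exp.mpr
    have hkn : (0:ℝ) ≤ (k:ℝ) := Nat.cast_nonneg k
    nlinarith [mul_le_mul_of_nonneg_left hB14 (mul_nonneg hkn (sq_nonneg (1-2*p)))]
  linarith [hbin ▸ h1]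
end
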